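/- Assume the rate coefficients satisfy the growth condition (GB) with constants C, Q and weights q_{i,k}, and let σ belong to class 𝓔 with associated constant m_σ. Then there exist an integer M₀ ≥ 2 and, for each T > 0 and each choice of nonnegative initial data (c_{0i}), a constant γ_T > 0 depending only on σ, C, m_σ, Q, T and ∑_i i c_{0i}, such that for every integer N ≥ M₀ the nonnegative solution c^N of the N-truncated isolated DGED system with initial data c_i^N(0) = c_{0i} (0 ≤ i ≤ N) satisfies 0 ≤ ∫_0^T ∑_{p=M₀}^{N} ∑_{k=1}^{p−1} (σ(p−1)/(p−1)) a(p,0;k) c_0^N(t) c_p^N(t) dt ≤ γ_T ∑_{i=0}^N σ(i) c_{0i}. -/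

import Mathlib

open Finset

/-- Truncated operator `Q^N_{1,i}`. -/
noncomputable def QN1 (a : ℕ → ℕ → ℕ → ℝ) (N : ℕ) (c : ℕ → ℝ) (i : ℕ) : ℝ :=
  ∑ k ∈ Finset.Icc 1 (N - i), ∑ j ∈ Finset.Icc 0 (N - k), a (i + k) j k * c (i + k) * c j

/-- Truncated operator `Q^N_{2,i}`. -/
noncomputable def QN2 (a : ℕ → ℕ → ℕ → ℝ) (N : ℕ) (c : ℕ → ℝ) (i : ℕ) : ℝ :=
  -∑ k ∈ Finset.Icc 1 (N - i), ∑ j ∈ Finset.Icc k N, a j i k * c j * c i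

/-- Truncated operator `Q^N_{3,i}`. -/
noncomputable def QN3 (a : ℕ → ℕ → ℕ → ℝ) (N : ℕ) (c : ℕ → ℝ) (i : ℕ) : ℝ :=
  ∑ k ∈ Finset.Icc 1 i, ∑ j ∈ Finset.Icc k N, a j (i - k) k * c j * c (i - k)

/-- Truncated operator `Q^N_{4,i}`. -/
noncomputable def QN4 (a : ℕ → ℕ → ℕ → ℝ) (N : ℕ) (c : ℕ → ℝ) (i : ℕ) : ℝ :=
  -∑ k ∈ Finset.Icc 1 i, ∑ j ∈ Finset.Icc 0 (N - k), a i j k * c j * c i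

/-- `c` is a solution of the `N`-truncated isolated DGED system on the set `I`. -/
def IsTruncSolIso (a : ℕ → ℕ → ℕ → ℝ) (N : ℕ) (I : Set ℝ) (c : ℕ → ℝ → ℝ) : Prop :=
  ∀ t ∈ I,
    HasDerivAt (c 0) (QN1 a N (fun n => c n t) 0 + QN2 a N (fun n => c n t) 0) t ∧
    (∀ i, 1 ≤ i → i ≤ N - 1 →
      HasDerivAt (c i)
        (QN1 a N (fun n => c n t) i + QN2 a N (fun n => c n t) i +
          QN3 a N (fun n => c n t) i + QN4 a N (fun n => c n t) i) t) ∧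
    HasDerivAt (c N) (QN3 a N (fun n => c n t) N + QN4 a N (fun n => c n t) N) t


/-- Growth condition (GB) on the rate coefficients. -/
def GB (a : ℕ → ℕ → ℕ → ℝ) (C Q : ℝ) (q : ℕ → ℕ → ℝ) : Prop :=
  1 ≤ C ∧ 1 ≤ Q ∧ (∀ i k, 0 ≤ q i k) ∧
  (∀ i : ℕ, 1 ≤ i →
    ∑ k ∈ Finset.Icc 1 i, (k : ℝ) * ((i : ℝ) - k + 1) * q i k ≤ Q * i) ∧
  (∀ i j k : ℕ, 1 ≤ k → k ≤ i → 1 ≤ j →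
    a i j k ≤ C * ((i : ℝ) - k + 1) * ((j : ℝ) + k) * q i k)

/-- The class `𝓔` of convex weight functions. -/
def ClassE (σ : ℝ → ℝ) : Prop :=
  ContDiffOn ℝ 1 σ (Set.Ici 0) ∧ ConvexOn ℝ (Set.Ici 0) σ ∧
  (∀ x : ℝ, 0 ≤ x → 0 ≤ σ x) ∧ σ 0 = 0 ∧
  0 ≤ derivWithin σ (Set.Ici 0) 0 ∧
  ConcaveOn ℝ (Set.Ici 0) (derivWithin σ (Set.Ici 0)) ∧
  Filter.Tendsto (derivWithin σ (Set.Ici 0)) Filter.atTop Filter.atTop ∧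
  Filter.Tendsto (fun r : ℝ => σ r / r) Filter.atTop Filter.atTop

/-- The class `𝓔₁` of convex weight functions. -/
def ClassE1 (σ : ℝ → ℝ) : Prop :=
  ContDiffOn ℝ 2 σ (Set.Ici 0) ∧ ConvexOn ℝ (Set.Ici 0) σ ∧
  (∀ x : ℝ, 0 ≤ x → 0 ≤ σ x) ∧ σ 0 = 0 ∧
  derivWithin σ (Set.Ici 0) 0 = 0 ∧
  ConvexOn ℝ (Set.Ici 0) (derivWithin σ (Set.Ici 0)) ∧
  ∃ A : ℝ, 0 ≤ A ∧ ∀ x : ℝ, 0 ≤ x →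
    derivWithin σ (Set.Ici 0) (2 * x) ≤ A * derivWithin σ (Set.Ici 0) x

/-- `m` is a constant associated to `σ` as in Lemma 3.2 of Laurençot–Mischler. -/
def SigmaConst (σ : ℝ → ℝ) (m : ℝ) : Prop :=
  0 ≤ m ∧ ∀ x y : ℝ, 0 ≤ x → 1 ≤ y →
    (x + y) * (σ (x + y) - σ x - σ y) ≤ m * (x * σ y + y * σ x)

/-! Testing the truncated system against `σ` gives `d/dt ∑ σ(i) c_i = E - D`, where `D ≥ 0` collects
the transfers into the empty cluster `0` (superadditivity of `σ`) and, by (GB) and the inequality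
defining `m`, the exchange part satisfies `E ≤ 2 C m Q (∑ i c_i) (∑ σ(i) c_i)`. The mass
`∑ i c_i` is conserved, so a Gronwall argument bounds `∫₀ᵀ D` by
`exp (2 C m Q ρ T) ∑ σ(i) c_{0i}` with `ρ = ∑ i c_{0i}`. Finally, once `σ(p-1)/(p-1) ≥ 2 σ(1)`,
convexity gives `σ(p-1)/(p-1) ≤ 2 (σ(p) - σ(p-k) - σ(k))` for `1 ≤ k ≤ p - 1`, so the integrand
of the theorem is at most `2 D`. -/

namespace ConvexOn

variable {f : ℝ → ℝ}

theorem map_add_map_le_of_add_eq {s : Set ℝ} (hf : ConvexOn ℝ s f) {u v w z : ℝ}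
    (hu : u ∈ s) (hz : z ∈ s) (huv : u ≤ v) (hvz : v ≤ z) (h : v + w = u + z) :
    f v + f w ≤ f u + f z := by
  rcases huv.eq_or_lt with rfl | huv
  · rw [show w = z by linarith]
  rcases hvz.eq_or_lt with rfl | hvz
  · rw [show w = u by linarith, add_comm]
  obtain rfl : w = u + z - v := by linarith
  have hv := hf.secant_mono_aux1 hu hz huv hvz
  have hw := hf.secant_mono_aux1 hu hz (show u < u + z - v by linarith)
    (show u + z - v < z by linarith)
  have hsum : (z - u) * (f v + f (u + z - v)) ≤ (z - u) * (f u + f z) := by linarith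
  exact le_of_mul_le_mul_left hsum (by linarith)

variable (hf : ConvexOn ℝ (Set.Ici 0) f) (h0 : f 0 = 0)
include hf h0

theorem map_add_map_le_map_add {x y : ℝ} (hx : 0 ≤ x) (hy : 0 ≤ y) :
    f x + f y ≤ f (x + y) := by
  simpa [h0] using hf.map_add_map_le_of_add_eq (u := 0) (v := x) (w := y) (z := x + y)
    Set.self_mem_Ici (show 0 ≤ x + y by positivity) hx (by linarith) (by ring)

theorem map_sub_add_map_le {x y : ℝ} (hy : 0 ≤ y) (hyx : y ≤ x) : f (x - y) + f y ≤ f x := by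
  simpa using hf.map_add_map_le_map_add h0 (sub_nonneg.2 hyx) hy

theorem mul_map_le_mul_map {u v : ℝ} (hu : 0 ≤ u) (huv : u ≤ v) : v * f u ≤ u * f v := by
  rcases hu.eq_or_lt with rfl | hu
  · simp [h0]
  rcases huv.eq_or_lt with rfl | huv
  · rfl
  simpa [h0] using hf.secant_mono_aux1 Set.self_mem_Ici (show 0 ≤ v by linarith) hu huv

theorem div_le_two_mul_map_sub_sub {x z : ℝ} (hx : 1 ≤ x) (hxz : x ≤ z - 1)
    (hlarge : 2 * f 1 ≤ f (z - 1) / (z - 1)) :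
    f (z - 1) / (z - 1) ≤ 2 * (f z - f (z - x) - f x) := by
  have hz : 0 < z - 1 := by linarith
  have hsplit : f x + f (z - x) ≤ f 1 + f (z - 1) :=
    hf.map_add_map_le_of_add_eq (show (1 : ℝ) ∈ Set.Ici 0 by norm_num)
      (show z - 1 ∈ Set.Ici 0 from Set.mem_Ici.2 hz.le) hx hxz (by ring)
  have hslope : f (z - 1) / (z - 1) ≤ f z - f (z - 1) := by
    rw [div_le_iff₀ hz]
    nlinarith [hf.mul_map_le_mul_map h0 hz.le (show z - 1 ≤ z by linarith)]
  linarith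

end ConvexOn

section Reindexing

variable (N : ℕ) (f : ℕ → ℕ → ℝ)

theorem sum_range_sum_Icc_one_sub_comm :
    ∑ i ∈ range (N + 1), ∑ k ∈ Icc 1 (N - i), f i k
      = ∑ k ∈ Icc 1 N, ∑ i ∈ Icc 0 (N - k), f i k :=
  sum_comm' fun i k ↦ by simp only [mem_range, mem_Icc]; omega

theorem sum_range_sum_Icc_one_comm :
    ∑ i ∈ range (N + 1), ∑ k ∈ Icc 1 i, f i k = ∑ k ∈ Icc 1 N, ∑ i ∈ Icc k N, f i k :=
  sum_comm' fun i k ↦ by simp only [mem_range, mem_Icc]; omega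

theorem sum_Icc_zero_sub_add {k : ℕ} (hk : k ≤ N) (g : ℕ → ℝ) :
    ∑ i ∈ Icc 0 (N - k), g (i + k) = ∑ i ∈ Icc k N, g i := by
  have hIcc : Icc k N = (Icc 0 (N - k)).map (addRightEmbedding k) := by
    rw [map_add_right_Icc, zero_add, Nat.sub_add_cancel hk]
  rw [hIcc, sum_map]
  rfl

end Reindexing

/-- Since `QN3`, `QN4` vanish at `i = 0` and `QN1`, `QN2` at `i = N`, this is the right-hand side
of the equation for `c i` for every `i ≤ N`. -/
noncomputable def truncRHS (a : ℕ → ℕ → ℕ → ℝ) (N : ℕ) (c : ℕ → ℝ) (i : ℕ) : ℝ :=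
  QN1 a N c i + QN2 a N c i + QN3 a N c i + QN4 a N c i

noncomputable def moment (N : ℕ) (g c : ℕ → ℝ) : ℝ :=
  ∑ i ∈ range (N + 1), g i * c i

noncomputable def fragDissipation (a : ℕ → ℕ → ℕ → ℝ) (N : ℕ) (σ : ℝ → ℝ) (c : ℕ → ℝ) : ℝ :=
  ∑ i ∈ range (N + 1), ∑ k ∈ Icc 1 i, a i 0 k * c i * c 0 * (σ i - σ ↑(i - k) - σ k)

noncomputable def exchangeProduction (a : ℕ → ℕ → ℕ → ℝ) (N : ℕ) (σ : ℝ → ℝ) (c : ℕ → ℝ) : ℝ :=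
  ∑ i ∈ range (N + 1), ∑ k ∈ Icc 1 i, ∑ j ∈ Icc 1 (N - k),
    a i j k * c i * c j * (σ ↑(i - k) + σ ↑(j + k) - σ i - σ j)

section WeakFormulation

variable (a : ℕ → ℕ → ℕ → ℝ) (N : ℕ) (c g : ℕ → ℝ)

theorem sum_mul_QN1 :
    ∑ i ∈ range (N + 1), g i * QN1 a N c i
      = ∑ i ∈ range (N + 1), ∑ k ∈ Icc 1 i, ∑ j ∈ Icc 0 (N - k),
          a i j k * c i * c j * g (i - k) := by
  simp only [QN1, mul_sum]
  rw [sum_range_sum_Icc_one_sub_comm, sum_range_sum_Icc_one_comm]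
  refine sum_congr rfl fun k hk ↦ ?_
  rw [← sum_Icc_zero_sub_add N (mem_Icc.1 hk).2]
  refine sum_congr rfl fun i _ ↦ sum_congr rfl fun j _ ↦ ?_
  rw [Nat.add_sub_cancel]
  ring

theorem sum_mul_QN2 :
    ∑ i ∈ range (N + 1), g i * QN2 a N c i
      = ∑ i ∈ range (N + 1), ∑ k ∈ Icc 1 i, ∑ j ∈ Icc 0 (N - k),
          -(a i j k * c i * c j * g j) := by
  simp only [QN2, mul_neg, ← sum_neg_distrib, mul_sum]
  rw [sum_range_sum_Icc_one_sub_comm, sum_range_sum_Icc_one_comm]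
  refine sum_congr rfl fun k _ ↦ ?_
  rw [sum_comm]
  refine sum_congr rfl fun i _ ↦ sum_congr rfl fun j _ ↦ ?_
  ring

theorem sum_mul_QN3 :
    ∑ i ∈ range (N + 1), g i * QN3 a N c i
      = ∑ i ∈ range (N + 1), ∑ k ∈ Icc 1 i, ∑ j ∈ Icc 0 (N - k),
          a i j k * c i * c j * g (j + k) := by
  simp only [QN3, mul_sum]
  rw [sum_range_sum_Icc_one_comm, sum_range_sum_Icc_one_comm]
  refine sum_congr rfl fun k hk ↦ ?_
  rw [← sum_Icc_zero_sub_add N (mem_Icc.1 hk).2, sum_comm]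
  refine sum_congr rfl fun i _ ↦ sum_congr rfl fun j _ ↦ ?_
  rw [Nat.add_sub_cancel]
  ring

theorem sum_mul_QN4 :
    ∑ i ∈ range (N + 1), g i * QN4 a N c i
      = ∑ i ∈ range (N + 1), ∑ k ∈ Icc 1 i, ∑ j ∈ Icc 0 (N - k),
          -(a i j k * c i * c j * g i) := by
  simp only [QN4, mul_neg, ← sum_neg_distrib, mul_sum]
  refine sum_congr rfl fun i _ ↦ sum_congr rfl fun k _ ↦ sum_congr rfl fun j _ ↦ ?_
  ring

theorem sum_mul_truncRHS :
    ∑ i ∈ range (N + 1), g i * truncRHS a N c i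
      = ∑ i ∈ range (N + 1), ∑ k ∈ Icc 1 i, ∑ j ∈ Icc 0 (N - k),
          a i j k * c i * c j * (g (i - k) + g (j + k) - g i - g j) := by
  simp only [truncRHS, mul_add, sum_add_distrib, sum_mul_QN1, sum_mul_QN2, sum_mul_QN3,
    sum_mul_QN4]
  simp only [← sum_add_distrib]
  refine sum_congr rfl fun i _ ↦ sum_congr rfl fun k _ ↦ sum_congr rfl fun j _ ↦ ?_
  ring


theorem sum_natCast_mul_truncRHS : ∑ i ∈ range (N + 1), (i : ℝ) * truncRHS a N c i = 0 := by
  rw [sum_mul_truncRHS]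
  refine sum_eq_zero fun i _ ↦ sum_eq_zero fun k hk ↦ sum_eq_zero fun j _ ↦ ?_
  rw [Nat.cast_sub (mem_Icc.1 hk).2]
  push_cast
  ring

theorem sum_sigma_mul_truncRHS {σ : ℝ → ℝ} (h0 : σ 0 = 0) :
    ∑ i ∈ range (N + 1), σ i * truncRHS a N c i
      = exchangeProduction a N σ c - fragDissipation a N σ c := by
  rw [sum_mul_truncRHS, exchangeProduction, fragDissipation, ← sum_sub_distrib]
  refine sum_congr rfl fun i _ ↦ ?_
  rw [← sum_sub_distrib]
  refine sum_congr rfl fun k _ ↦ ?_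
  rw [← insert_Icc_add_one_left_eq_Icc (Nat.zero_le _), sum_insert (by simp)]
  simp only [Nat.cast_zero, h0, zero_add]
  ring

end WeakFormulation

theorem moment_nonneg {N : ℕ} {g c : ℕ → ℝ} (hg : ∀ i, 0 ≤ g i) (hc : ∀ i ≤ N, 0 ≤ c i) :
    0 ≤ moment N g c :=
  sum_nonneg fun i hi ↦ mul_nonneg (hg i) (hc i (Nat.lt_succ_iff.1 (mem_range.1 hi)))

theorem sum_Icc_le_moment {N n : ℕ} {g c : ℕ → ℝ} (hn : n ≤ N) (hg : ∀ i, 0 ≤ g i)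
    (hc : ∀ i ≤ N, 0 ≤ c i) : ∑ j ∈ Icc 1 n, g j * c j ≤ moment N g c := by
  refine sum_le_sum_of_subset_of_nonneg (fun j hj ↦ ?_) fun j hj _ ↦ ?_
  · simp only [mem_Icc, mem_range] at hj ⊢
    omega
  · exact mul_nonneg (hg j) (hc j (Nat.lt_succ_iff.1 (mem_range.1 hj)))

section Estimates

variable {a : ℕ → ℕ → ℕ → ℝ} {N : ℕ} {σ : ℝ → ℝ} {c : ℕ → ℝ}
  (ha : ∀ i j k, 0 ≤ a i j k) (hf : ConvexOn ℝ (Set.Ici 0) σ) (h0 : σ 0 = 0)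
  (hc : ∀ i ≤ N, 0 ≤ c i)
include ha hf h0 hc

theorem fragDissipation_term_nonneg {i k : ℕ} (hki : k ≤ i) (hiN : i ≤ N) :
    0 ≤ a i 0 k * c i * c 0 * (σ i - σ ↑(i - k) - σ k) := by
  have hsplit := hf.map_sub_add_map_le h0 (Nat.cast_nonneg k) (Nat.cast_le.2 hki)
  rw [Nat.cast_sub hki]
  exact mul_nonneg (mul_nonneg (mul_nonneg (ha i 0 k) (hc i hiN)) (hc 0 (Nat.zero_le N)))
    (by linarith)

theorem fragDissipation_nonneg : 0 ≤ fragDissipation a N σ c :=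
  sum_nonneg fun _ hi ↦ sum_nonneg fun _ hk ↦ fragDissipation_term_nonneg ha hf h0 hc
    (mem_Icc.1 hk).2 (Nat.lt_succ_iff.1 (mem_range.1 hi))

theorem sum_slope_mul_le_two_mul_fragDissipation {M : ℕ}
    (hlarge : ∀ p ≥ M, 2 * σ 1 ≤ σ ((p : ℝ) - 1) / ((p : ℝ) - 1)) :
    ∑ p ∈ Icc M N, ∑ k ∈ Icc 1 (p - 1), σ ((p : ℝ) - 1) / ((p : ℝ) - 1) * a p 0 k * c 0 * c p
      ≤ 2 * fragDissipation a N σ c := by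
  have hterm := fun p hpN k hkp ↦ fragDissipation_term_nonneg ha hf h0 hc (i := p) (k := k) hkp hpN
  calc _ ≤ ∑ p ∈ Icc M N, ∑ k ∈ Icc 1 (p - 1),
          2 * (a p 0 k * c p * c 0 * (σ p - σ ↑(p - k) - σ k)) := by
        refine sum_le_sum fun p hp ↦ sum_le_sum fun k hk ↦ ?_
        obtain ⟨hMp, hpN⟩ := mem_Icc.1 hp
        obtain ⟨hk1, hkp⟩ := mem_Icc.1 hk
        have hkp' : (k : ℝ) ≤ p - 1 := by
          rw [← Nat.cast_one, ← Nat.cast_sub (by omega)]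
          exact Nat.cast_le.2 hkp
        have hmain := hf.div_le_two_mul_map_sub_sub h0 (Nat.one_le_cast.2 hk1) hkp' (hlarge p hMp)
        rw [Nat.cast_sub (by omega : k ≤ p)]
        have hca : 0 ≤ a p 0 k * c 0 * c p :=
          mul_nonneg (mul_nonneg (ha p 0 k) (hc 0 (Nat.zero_le N))) (hc p hpN)
        nlinarith
    _ ≤ ∑ p ∈ Icc M N, ∑ k ∈ Icc 1 p, 2 * (a p 0 k * c p * c 0 * (σ p - σ ↑(p - k) - σ k)) :=
        sum_le_sum fun p hp ↦ sum_le_sum_of_subset_of_nonneg (Icc_subset_Icc_right (by omega))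
          fun k hk _ ↦ mul_nonneg zero_le_two (hterm p (mem_Icc.1 hp).2 k (mem_Icc.1 hk).2)
    _ ≤ ∑ p ∈ range (N + 1), ∑ k ∈ Icc 1 p,
          2 * (a p 0 k * c p * c 0 * (σ p - σ ↑(p - k) - σ k)) := by
        refine sum_le_sum_of_subset_of_nonneg (fun p hp ↦ ?_) fun p hp _ ↦ sum_nonneg fun k hk ↦ ?_
        · exact mem_range.2 (Nat.lt_succ_of_le (mem_Icc.1 hp).2)
        · exact mul_nonneg zero_le_two
            (hterm p (Nat.lt_succ_iff.1 (mem_range.1 hp)) k (mem_Icc.1 hk).2)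
    _ = _ := by simp only [fragDissipation, mul_sum]

end Estimates

section ExchangeEstimate

variable {a : ℕ → ℕ → ℕ → ℝ} {C Q : ℝ} {q : ℕ → ℕ → ℝ} {σ : ℝ → ℝ} {m : ℝ}
  (ha : ∀ i j k, 0 ≤ a i j k) (hGB : GB a C Q q) (hf : ConvexOn ℝ (Set.Ici 0) σ) (h0 : σ 0 = 0)
  (hnn : ∀ x, 0 ≤ x → 0 ≤ σ x) (hm : SigmaConst σ m)
include ha hGB hf h0 hnn hm

theorem rate_mul_exchange_le {i j k : ℕ} (hk : 1 ≤ k) (hki : k ≤ i) (hj : 1 ≤ j) :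
    a i j k * (σ ↑(i - k) + σ ↑(j + k) - σ i - σ j)
      ≤ C * (i - k + 1) * q i k * m * (j * σ k + k * σ j) := by
  obtain ⟨hC, -, hq, -, ha_le⟩ := hGB
  have hki' : (k : ℝ) ≤ i := Nat.cast_le.2 hki
  have hk' : (1 : ℝ) ≤ k := Nat.one_le_cast.2 hk
  have hw : 0 ≤ C * (i - k + 1) * q i k := mul_nonneg (by nlinarith) (hq i k)
  have hrhs : 0 ≤ j * σ k + k * σ j := by
    have := hnn k (by positivity)
    have := hnn j (by positivity)
    positivity
  rw [Nat.cast_sub hki, Nat.cast_add]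
  set Δ := σ (i - k) + σ (j + k) - σ i - σ j
  have hΔ : Δ ≤ σ (j + k) - σ j - σ k := by
    linarith [hf.map_sub_add_map_le h0 (by positivity) hki']
  rcases le_or_gt Δ 0 with hneg | hpos
  · calc a i j k * Δ ≤ 0 := mul_nonpos_of_nonneg_of_nonpos (ha i j k) hneg
      _ ≤ _ := by rw [mul_assoc]; exact mul_nonneg hw (mul_nonneg hm.1 hrhs)
  calc a i j k * Δ ≤ C * (i - k + 1) * (j + k) * q i k * Δ :=
        mul_le_mul_of_nonneg_right (ha_le i j k hk hki hj) hpos.le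
    _ = C * (i - k + 1) * q i k * ((j + k) * Δ) := by ring
    _ ≤ C * (i - k + 1) * q i k * ((j + k) * (σ (j + k) - σ j - σ k)) := by gcongr
    _ ≤ C * (i - k + 1) * q i k * (m * (j * σ k + k * σ j)) :=
        mul_le_mul_of_nonneg_left (hm.2 j k (Nat.cast_nonneg j) hk') hw
    _ = _ := by ring

variable {N : ℕ} {c : ℕ → ℝ} (hc : ∀ i ≤ N, 0 ≤ c i)
include hc

theorem sum_exchange_le_moments {i k : ℕ} (hk : 1 ≤ k) (hki : k ≤ i) (hiN : i ≤ N) :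
    ∑ j ∈ Icc 1 (N - k), a i j k * c i * c j * (σ ↑(i - k) + σ ↑(j + k) - σ i - σ j)
      ≤ C * (i - k + 1) * q i k * m * c i
        * (σ k * moment N (fun n ↦ (n : ℝ)) c + k * moment N (fun n ↦ σ n) c) := by
  have hci := hc i hiN
  have hw : 0 ≤ C * (i - k + 1) * q i k * m * c i := by
    obtain ⟨hC, -, hq, -⟩ := hGB
    have : (k : ℝ) ≤ i := Nat.cast_le.2 hki
    exact mul_nonneg (mul_nonneg (mul_nonneg (mul_nonneg (by linarith) (by linarith)) (hq i k))
      hm.1) hci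
  calc _ ≤ ∑ j ∈ Icc 1 (N - k), C * (i - k + 1) * q i k * m * c i
          * (σ k * ((j : ℝ) * c j) + k * (σ j * c j)) := by
        refine sum_le_sum fun j hj ↦ ?_
        have hcj := hc j (by simp only [mem_Icc] at hj; omega)
        have hterm := rate_mul_exchange_le ha hGB hf h0 hnn hm hk hki (mem_Icc.1 hj).1
        calc _ = c i * c j * (a i j k * (σ ↑(i - k) + σ ↑(j + k) - σ i - σ j)) := by ring
          _ ≤ c i * c j * (C * (i - k + 1) * q i k * m * (j * σ k + k * σ j)) := by gcongr
          _ = _ := by ring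
    _ = C * (i - k + 1) * q i k * m * c i
          * (σ k * ∑ j ∈ Icc 1 (N - k), (j : ℝ) * c j
            + k * ∑ j ∈ Icc 1 (N - k), σ j * c j) := by
        rw [← mul_sum, mul_sum _ _ (k : ℝ), mul_sum _ _ (σ k), ← sum_add_distrib]
    _ ≤ _ := by
        have hσk := hnn k k.cast_nonneg
        have hsub := Nat.sub_le N k
        gcongr
        · exact sum_Icc_le_moment hsub (fun n ↦ n.cast_nonneg) hc
        · exact sum_Icc_le_moment hsub (fun n ↦ hnn n n.cast_nonneg) hc

theorem sum_sum_exchange_le_moments {i : ℕ} (hiN : i ≤ N) :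
    ∑ k ∈ Icc 1 i, ∑ j ∈ Icc 1 (N - k), a i j k * c i * c j * (σ ↑(i - k) + σ ↑(j + k) - σ i - σ j)
      ≤ C * m * Q * (σ i * moment N (fun n ↦ (n : ℝ)) c + i * moment N (fun n ↦ σ n) c)
        * c i := by
  rcases Nat.eq_zero_or_pos i with rfl | hi
  · simp [h0]
  set M := moment N (fun n ↦ (n : ℝ)) c
  set S := moment N (fun n ↦ σ n) c
  have hM : 0 ≤ M := moment_nonneg (fun n ↦ n.cast_nonneg) hc
  have hfac : 0 ≤ C * m * c i := by
    have := hGB.1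
    exact mul_nonneg (mul_nonneg (by linarith) hm.1) (hc i hiN)
  -- `σ k / k ≤ σ i / i` lets the weight `k * (i - k + 1) * q i k` of (GB) appear
  have hslope : ∀ k ∈ Icc 1 i, i * (σ k * M + k * S) ≤ k * (σ i * M + i * S) := by
    intro k hk
    have := hf.mul_map_le_mul_map h0 k.cast_nonneg (Nat.cast_le.2 (mem_Icc.1 hk).2)
    nlinarith
  have hsum : ∑ k ∈ Icc 1 i, (k : ℝ) * (i - k + 1) * q i k ≤ Q * i := hGB.2.2.2.1 i hi
  refine le_of_mul_le_mul_left ?_ (show (0 : ℝ) < i by exact_mod_cast hi)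
  calc _ ≤ (i : ℝ) * ∑ k ∈ Icc 1 i, C * (i - k + 1) * q i k * m * c i * (σ k * M + k * S) := by
        gcongr with k hk
        exact sum_exchange_le_moments ha hGB hf h0 hnn hm hc (mem_Icc.1 hk).1 (mem_Icc.1 hk).2 hiN
    _ = ∑ k ∈ Icc 1 i, C * m * c i * ((i - k + 1) * q i k) * (i * (σ k * M + k * S)) := by
        rw [mul_sum]
        exact sum_congr rfl fun k _ ↦ by ring
    _ ≤ ∑ k ∈ Icc 1 i, C * m * c i * ((i - k + 1) * q i k) * (k * (σ i * M + i * S)) := by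
        refine sum_le_sum fun k hk ↦ mul_le_mul_of_nonneg_left (hslope k hk) ?_
        have : (k : ℝ) ≤ i := Nat.cast_le.2 (mem_Icc.1 hk).2
        exact mul_nonneg hfac (mul_nonneg (by linarith) (hGB.2.2.1 i k))
    _ = C * m * c i * (σ i * M + i * S) * ∑ k ∈ Icc 1 i, (k : ℝ) * (i - k + 1) * q i k := by
        rw [mul_sum]
        exact sum_congr rfl fun k _ ↦ by ring
    _ ≤ C * m * c i * (σ i * M + i * S) * (Q * i) := by
        have := hnn i i.cast_nonneg
        have hS : 0 ≤ S := moment_nonneg (fun n ↦ hnn n n.cast_nonneg) hc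
        gcongr
    _ = _ := by ring

theorem exchangeProduction_le :
    exchangeProduction a N σ c
      ≤ 2 * C * m * Q * moment N (fun n ↦ (n : ℝ)) c * moment N (fun n ↦ σ n) c := by
  calc _ ≤ ∑ i ∈ range (N + 1), C * m * Q * (σ i * moment N (fun n ↦ (n : ℝ)) c
          + i * moment N (fun n ↦ σ n) c) * c i :=
        sum_le_sum fun i hi ↦
          sum_sum_exchange_le_moments ha hGB hf h0 hnn hm hc (Nat.lt_succ_iff.1 (mem_range.1 hi))
    _ = C * m * Q * moment N (fun n ↦ (n : ℝ)) c * ∑ i ∈ range (N + 1), σ i * c i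
          + C * m * Q * moment N (fun n ↦ σ n) c * ∑ i ∈ range (N + 1), (i : ℝ) * c i := by
        rw [mul_sum, mul_sum, ← sum_add_distrib]
        exact sum_congr rfl fun i _ ↦ by ring
    _ = _ := by
        unfold moment
        ring

end ExchangeEstimate

section Gronwall

open Real Set

variable {S G D : ℝ → ℝ} {K T : ℝ} (hK : 0 ≤ K) (hT : 0 ≤ T)
  (hS : ∀ t ∈ Icc 0 T, HasDerivAt S (G t - D t) t) (hD : ContinuousOn D (Icc 0 T))
  (hD0 : ∀ t ∈ Icc 0 T, 0 ≤ D t) (hG : ∀ t ∈ Icc 0 T, G t ≤ K * S t)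
include hK hT hS hD hD0 hG

theorem antitoneOn_exp_neg_mul_mul_add_integral :
    AntitoneOn (fun u ↦ exp (-K * u) * (S u + ∫ t in (0 : ℝ)..u, D t)) (Icc 0 T) := by
  set P : ℝ → ℝ := fun u ↦ ∫ t in (0 : ℝ)..u, D t
  have hP_nonneg : ∀ u ∈ Icc 0 T, 0 ≤ P u := fun u hu ↦
    intervalIntegral.integral_nonneg hu.1 fun t ht ↦ hD0 t ⟨ht.1, ht.2.trans hu.2⟩
  have hP_cont : ContinuousOn P (Icc 0 T) := by
    have := intervalIntegral.continuousOn_primitive_interval (μ := MeasureTheory.volume)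
      (a := 0) (b := T) (f := D) (by rw [uIcc_of_le hT]; exact hD.integrableOn_Icc)
    rwa [uIcc_of_le hT] at this
  have hP_deriv : ∀ x ∈ Ioo 0 T, HasDerivAt P (D x) x := fun x hx ↦
    intervalIntegral.integral_hasDerivAt_right
      ((hD.mono (Icc_subset_Icc le_rfl hx.2.le)).intervalIntegrable_of_Icc hx.1.le)
      (ContinuousOn.stronglyMeasurableAtFilter isOpen_Ioo (hD.mono Ioo_subset_Icc_self) x hx)
      ((hD.mono Ioo_subset_Icc_self).continuousAt (isOpen_Ioo.mem_nhds hx))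
  have hderiv : ∀ x ∈ Ioo 0 T, HasDerivAt (fun u ↦ exp (-K * u) * (S u + P u))
      (exp (-K * x) * (G x - K * (S x + P x))) x := fun x hx ↦
    (((hasDerivAt_id' x).const_mul (-K)).exp.mul
      ((hS x (Ioo_subset_Icc_self hx)).add (hP_deriv x hx))).congr_deriv
      (by simp only [Pi.add_apply]; ring)
  apply antitoneOn_of_deriv_nonpos (convex_Icc 0 T)
  · have hS_cont : ContinuousOn S (Icc 0 T) := fun t ht ↦
      (hS t ht).continuousAt.continuousWithinAt
    exact (Continuous.continuousOn (by fun_prop)).mul (hS_cont.add hP_cont)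
  · intro x hx
    rw [interior_Icc] at hx
    exact (hderiv x hx).differentiableAt.differentiableWithinAt
  · intro x hx
    rw [interior_Icc] at hx
    rw [(hderiv x hx).deriv]
    have hxI := Ioo_subset_Icc_self hx
    have := hG x hxI
    have := hP_nonneg x hxI
    exact mul_nonpos_of_nonneg_of_nonpos (exp_pos _).le (by nlinarith)

theorem integral_le_exp_mul_of_hasDerivAt_sub (hST : 0 ≤ S T) :
    ∫ t in (0 : ℝ)..T, D t ≤ exp (K * T) * S 0 := by
  have hmono := antitoneOn_exp_neg_mul_mul_add_integral hK hT hS hD hD0 hG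
    ⟨le_rfl, hT⟩ ⟨hT, le_rfl⟩ hT
  simp only [intervalIntegral.integral_same, mul_zero, exp_zero, one_mul, add_zero] at hmono
  have hscaled := mul_le_mul_of_nonneg_left hmono (exp_pos (K * T)).le
  rw [← mul_assoc, ← exp_add, show K * T + -K * T = 0 by ring, exp_zero, one_mul] at hscaled
  linarith

end Gronwall

namespace IsTruncSolIso

variable {a : ℕ → ℕ → ℕ → ℝ} {N : ℕ} {I : Set ℝ} {c : ℕ → ℝ → ℝ}

theorem hasDerivAt_truncRHS (h : IsTruncSolIso a N I c) {t : ℝ} (ht : t ∈ I) {i : ℕ}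
    (hi : i ≤ N) : HasDerivAt (c i) (truncRHS a N (c · t) i) t := by
  obtain ⟨h_first, h_mid, h_last⟩ := h t ht
  rcases Nat.eq_zero_or_pos i with rfl | hi0
  · simpa [truncRHS, QN3, QN4] using h_first
  rcases hi.eq_or_lt with rfl | hiN
  · simpa [truncRHS, QN1, QN2] using h_last
  exact h_mid i hi0 (by omega)

theorem continuousOn (h : IsTruncSolIso a N I c) {i : ℕ} (hi : i ≤ N) : ContinuousOn (c i) I :=
  fun _ ht ↦ (h.hasDerivAt_truncRHS ht hi).continuousAt.continuousWithinAt

theorem continuousOn_fragDissipation (h : IsTruncSolIso a N I c) (σ : ℝ → ℝ) :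
    ContinuousOn (fun t ↦ fragDissipation a N σ (c · t)) I := by
  refine continuousOn_finsetSum _ fun i hi ↦ continuousOn_finsetSum _ fun k _ ↦ ?_
  have := h.continuousOn (Nat.lt_succ_iff.1 (mem_range.1 hi))
  have := h.continuousOn (Nat.zero_le N)
  fun_prop

theorem hasDerivAt_moment (h : IsTruncSolIso a N I c) {t : ℝ} (ht : t ∈ I) (g : ℕ → ℝ) :
    HasDerivAt (fun s ↦ moment N g (c · s))
      (∑ i ∈ range (N + 1), g i * truncRHS a N (c · t) i) t :=
  HasDerivAt.fun_sum fun i hi ↦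
    (h.hasDerivAt_truncRHS ht (Nat.lt_succ_iff.1 (mem_range.1 hi))).const_mul (g i)

variable {T : ℝ}

theorem moment_natCast_eq (h : IsTruncSolIso a N (Set.Icc 0 T) c) {t : ℝ}
    (ht : t ∈ Set.Icc 0 T) :
    moment N (fun n ↦ (n : ℝ)) (c · t) = moment N (fun n ↦ (n : ℝ)) (c · 0) := by
  have hderiv : ∀ s ∈ Set.Icc 0 T, HasDerivAt (fun s ↦ moment N (fun n ↦ (n : ℝ)) (c · s)) 0 s :=
    fun s hs ↦ (h.hasDerivAt_moment hs _).congr_deriv (sum_natCast_mul_truncRHS a N _)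
  exact constant_of_has_deriv_right_zero (fun s hs ↦ (hderiv s hs).continuousAt.continuousWithinAt)
    (fun s hs ↦ (hderiv s (Set.Ico_subset_Icc_self hs)).hasDerivWithinAt) t ht

variable {σ : ℝ → ℝ} (ha : ∀ i j k, 0 ≤ a i j k) (hf : ConvexOn ℝ (Set.Ici 0) σ) (h0 : σ 0 = 0)
  (hnn : ∀ x, 0 ≤ x → 0 ≤ σ x) (hT : 0 ≤ T) (h : IsTruncSolIso a N (Set.Icc 0 T) c)
  (hc : ∀ i ≤ N, ∀ t ∈ Set.Icc 0 T, 0 ≤ c i t)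
include ha hf h0 hnn hT h hc

theorem integral_fragDissipation_le {C Q m : ℝ} {q : ℕ → ℕ → ℝ} (hGB : GB a C Q q)
    (hm : SigmaConst σ m) :
    ∫ t in (0 : ℝ)..T, fragDissipation a N σ (c · t)
      ≤ Real.exp (2 * C * m * Q * moment N (fun n ↦ (n : ℝ)) (c · 0) * T)
        * moment N (fun n ↦ σ n) (c · 0) := by
  have hc' : ∀ t ∈ Set.Icc 0 T, ∀ i ≤ N, 0 ≤ c i t := fun t ht i hi ↦ hc i hi t ht
  refine integral_le_exp_mul_of_hasDerivAt_sub (S := fun t ↦ moment N (fun n ↦ σ n) (c · t))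
    (G := fun t ↦ exchangeProduction a N σ (c · t)) ?_ hT (fun t ht ↦ ?_)
    (h.continuousOn_fragDissipation σ) (fun t ht ↦ fragDissipation_nonneg ha hf h0 (hc' t ht))
    (fun t ht ↦ ?_) (moment_nonneg (fun n ↦ hnn n n.cast_nonneg) (hc' T ⟨hT, le_rfl⟩))
  · obtain ⟨hC, hQ, -⟩ := hGB
    have := moment_nonneg (fun n ↦ n.cast_nonneg) (hc' 0 ⟨le_rfl, hT⟩)
    have := hm.1
    positivity
  · exact (h.hasDerivAt_moment ht _).congr_deriv (sum_sigma_mul_truncRHS a N _ h0)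
  · rw [← h.moment_natCast_eq ht]
    exact exchangeProduction_le ha hGB hf h0 hnn hm (hc' t ht)

theorem integral_sum_slope_mul_le {M : ℕ}
    (hlarge : ∀ p ≥ M, 2 * σ 1 ≤ σ ((p : ℝ) - 1) / ((p : ℝ) - 1)) :
    (0 ≤ ∫ t in (0 : ℝ)..T, ∑ p ∈ Icc M N, ∑ k ∈ Icc 1 (p - 1),
        σ ((p : ℝ) - 1) / ((p : ℝ) - 1) * a p 0 k * c 0 t * c p t) ∧
    (∫ t in (0 : ℝ)..T, ∑ p ∈ Icc M N, ∑ k ∈ Icc 1 (p - 1),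
        σ ((p : ℝ) - 1) / ((p : ℝ) - 1) * a p 0 k * c 0 t * c p t)
      ≤ 2 * ∫ t in (0 : ℝ)..T, fragDissipation a N σ (c · t) := by
  have hσ1 := hnn 1 zero_le_one
  refine ⟨intervalIntegral.integral_nonneg hT fun t ht ↦ sum_nonneg fun p hp ↦
    sum_nonneg fun k _ ↦ ?_, ?_⟩
  · have := hlarge p (mem_Icc.1 hp).1
    have := ha p 0 k
    have := hc 0 (Nat.zero_le N) t ht
    have := hc p (mem_Icc.1 hp).2 t ht
    have : 0 ≤ σ ((p : ℝ) - 1) / ((p : ℝ) - 1) := by linarith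
    positivity
  have hP_cont : ContinuousOn (fun t ↦ ∑ p ∈ Icc M N, ∑ k ∈ Icc 1 (p - 1),
      σ ((p : ℝ) - 1) / ((p : ℝ) - 1) * a p 0 k * c 0 t * c p t) (Set.Icc 0 T) := by
    refine continuousOn_finsetSum _ fun p hp ↦ continuousOn_finsetSum _ fun k _ ↦ ?_
    have := h.continuousOn (mem_Icc.1 hp).2
    have := h.continuousOn (Nat.zero_le N)
    fun_prop
  rw [← intervalIntegral.integral_const_mul]
  exact intervalIntegral.integral_mono_on hT (hP_cont.intervalIntegrable_of_Icc hT)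
    (((h.continuousOn_fragDissipation σ).intervalIntegrable_of_Icc hT).const_mul 2)
    fun t ht ↦ sum_slope_mul_le_two_mul_fragDissipation ha hf h0 (fun i hi ↦ hc i hi t ht) hlarge

end IsTruncSolIso

theorem truncated_fragmentation_integral_bound_general
    (a : ℕ → ℕ → ℕ → ℝ) (ha : ∀ i j k, 0 ≤ a i j k)
    (C Q : ℝ) (q : ℕ → ℕ → ℝ) (hGB : GB a C Q q)
    (σ : ℝ → ℝ) (hσ : ClassE σ) (m : ℝ) (hm : SigmaConst σ m) :
    ∃ M₀ : ℕ, 2 ≤ M₀ ∧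
      ∀ T : ℝ, 0 < T →
        ∀ c0 : ℕ → ℝ, (∀ i, 0 ≤ c0 i) → Summable (fun i : ℕ => (i : ℝ) * c0 i) →
          ∃ γ : ℝ, 0 < γ ∧
            ∀ N : ℕ, M₀ ≤ N →
              ∀ c : ℕ → ℝ → ℝ, IsTruncSolIso a N (Set.Icc 0 T) c →
                (∀ i, i ≤ N → c i 0 = c0 i) →
                (∀ i, i ≤ N → ∀ t ∈ Set.Icc (0 : ℝ) T, 0 ≤ c i t) →
                (0 ≤ ∫ t in (0 : ℝ)..T,
                    ∑ p ∈ Finset.Icc M₀ N, ∑ k ∈ Finset.Icc 1 (p - 1),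
                      σ ((p : ℝ) - 1) / ((p : ℝ) - 1) * a p 0 k * c 0 t * c p t) ∧
                (∫ t in (0 : ℝ)..T,
                    ∑ p ∈ Finset.Icc M₀ N, ∑ k ∈ Finset.Icc 1 (p - 1),
                      σ ((p : ℝ) - 1) / ((p : ℝ) - 1) * a p 0 k * c 0 t * c p t)
                  ≤ γ * ∑ i ∈ Finset.range (N + 1), σ i * c0 i := by
  obtain ⟨-, hf, hnn, h0, -, -, -, hsuperlinear⟩ := hσ
  obtain ⟨M₀, hM₀⟩ := (((hsuperlinear.comp (Filter.tendsto_atTop_add_const_right _ (-1)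
    tendsto_natCast_atTop_atTop)).eventually_ge_atTop (2 * σ 1)).and
    (Filter.eventually_ge_atTop 2)).exists_forall_of_atTop
  refine ⟨M₀, (hM₀ M₀ le_rfl).2, fun T hT c0 hc0 hsum ↦ ?_⟩
  set ρ := ∑' i : ℕ, (i : ℝ) * c0 i
  refine ⟨2 * Real.exp (2 * C * m * Q * ρ * T), by positivity, fun N _ c h hinit hc ↦ ?_⟩
  have hmoment0 (g : ℕ → ℝ) : moment N g (c · 0) = moment N g c0 :=
    sum_congr rfl fun i hi ↦ by dsimp only; rw [hinit i (Nat.lt_succ_iff.1 (mem_range.1 hi))]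
  have hrate : 2 * C * m * Q * moment N (fun n ↦ (n : ℝ)) c0 * T ≤ 2 * C * m * Q * ρ * T := by
    obtain ⟨hC, hQ, -⟩ := hGB
    have := hm.1
    have : moment N (fun n ↦ (n : ℝ)) c0 ≤ ρ :=
      hsum.sum_le_tsum _ fun i _ ↦ mul_nonneg i.cast_nonneg (hc0 i)
    gcongr
  obtain ⟨hP_nonneg, hP_le⟩ :=
    h.integral_sum_slope_mul_le ha hf h0 hnn hT.le hc fun p hp ↦ (hM₀ p hp).1
  have hdiss := h.integral_fragDissipation_le ha hf h0 hnn hT.le hc hGB hm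
  have hS0 := moment_nonneg (N := N) (fun n ↦ hnn n n.cast_nonneg) fun i _ ↦ hc0 i
  simp only [hmoment0] at hdiss
  refine ⟨hP_nonneg, hP_le.trans ?_⟩
  change _ ≤ _ * moment N (fun n ↦ σ n) c0
  nlinarith [mul_le_mul_of_nonneg_right (Real.exp_le_exp.2 hrate) hS0]

/-- Lemma 4.5, second part: integral bound for the fragmentation-type terms. -/
theorem truncated_fragmentation_integral_bound
    (a : ℕ → ℕ → ℕ → ℝ) (ha : ∀ i j k, 0 ≤ a i j k)
    (hzero : ∀ p : ℕ, 1 ≤ p → a p 0 p = 0)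
    (C Q : ℝ) (q : ℕ → ℕ → ℝ) (hGB : GB a C Q q)
    (σ : ℝ → ℝ) (hσ : ClassE σ) (m : ℝ) (hm : SigmaConst σ m) :
    ∃ M₀ : ℕ, 2 ≤ M₀ ∧
      ∀ T : ℝ, 0 < T →
        ∀ c0 : ℕ → ℝ, (∀ i, 0 ≤ c0 i) → Summable (fun i : ℕ => (i : ℝ) * c0 i) →
          ∃ γ : ℝ, 0 < γ ∧
            ∀ N : ℕ, M₀ ≤ N →
              ∀ c : ℕ → ℝ → ℝ, IsTruncSolIso a N (Set.Icc 0 T) c →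
                (∀ i, i ≤ N → c i 0 = c0 i) →
                (∀ i, i ≤ N → ∀ t ∈ Set.Icc (0 : ℝ) T, 0 ≤ c i t) →
                (0 ≤ ∫ t in (0 : ℝ)..T,
                    ∑ p ∈ Finset.Icc M₀ N, ∑ k ∈ Finset.Icc 1 (p - 1),
                      σ ((p : ℝ) - 1) / ((p : ℝ) - 1) * a p 0 k * c 0 t * c p t) ∧
                (∫ t in (0 : ℝ)..T,
                    ∑ p ∈ Finset.Icc M₀ N, ∑ k ∈ Finset.Icc 1 (p - 1),
                      σ ((p : ℝ) - 1) / ((p : ℝ) - 1) * a p 0 k * c 0 t * c p t)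
                  ≤ γ * ∑ i ∈ Finset.range (N + 1), σ i * c0 i :=
  truncated_fragmentation_integral_bound_general a ha C Q q hGB σ hσ m hm
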